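/- Let G=(V,E) be a graph whose edge set E is independent, and let G₁=(V₁,E₁) and G₂=(V₂,E₂) be subgraphs of G such that each Eᵢ is independent with |Eᵢ| = 2|Vᵢ| − 3 (Vᵢ the support of Eᵢ). If |V₁ ∩ V₂| ≥ 2, then the graph G₃=(V₃,E₃) generated by E₃ = E₁ ∪ E₂ is minimally rigid in ℝ²: E₃ is independent and |E₃| = 2|V₃| − 3. -/
import Mathlib


/-- The support of an edge set: the set of all endpoints of its edges. -/
def edgeSupport {V : Type*} [DecidableEq V] (E : Finset (Sym2 V)) : Finset V :=
  E.sup (fun e => Sym2.lift ⟨fun a b => ({a, b} : Finset V), fun a b => Finset.pair_comm a b⟩ e)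

/-- An edge set `E` is independent if every nonempty subset `E' ⊆ E` satisfies
`|E'| ≤ 2|V'| - 3`, where `V'` is the support of `E'`. -/
def EdgeIndep {V : Type*} [DecidableEq V] (E : Finset (Sym2 V)) : Prop :=
  ∀ E' ⊆ E, E'.Nonempty → (E'.card : ℤ) ≤ 2 * (edgeSupport E').card - 3


lemma edgeSupport_mono {V : Type*} [DecidableEq V] {A B : Finset (Sym2 V)} (h : A ⊆ B) :
    edgeSupport A ⊆ edgeSupport B := Finset.le_iff_subset.mp (Finset.sup_mono h)

lemma edgeSupport_union {V : Type*} [DecidableEq V] (A B : Finset (Sym2 V)) :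
    edgeSupport (A ∪ B) = edgeSupport A ∪ edgeSupport B := Finset.sup_union

/-- Let `G = (V, E)` be a graph whose edge set is independent, and let
`G₁ = (V₁, E₁)`, `G₂ = (V₂, E₂)` be minimally rigid subgraphs of `G` (each `Eᵢ` independent
with `|Eᵢ| = 2|Vᵢ| - 3`). If `|V₁ ∩ V₂| ≥ 2` then the graph `G₃` generated by
`E₃ = E₁ ∪ E₂` is minimally rigid in `ℝ²`: `E₃` is independent and `|E₃| = 2|V₃| - 3`. -/
theorem union_of_overlapping_minimally_rigid_subgraphs {V : Type*} [DecidableEq V]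
    (E E₁ E₂ : Finset (Sym2 V)) (hE : EdgeIndep E)
    (hsub₁ : E₁ ⊆ E) (hsub₂ : E₂ ⊆ E)
    (hind₁ : EdgeIndep E₁) (hind₂ : EdgeIndep E₂)
    (hcard₁ : (E₁.card : ℤ) = 2 * (edgeSupport E₁).card - 3)
    (hcard₂ : (E₂.card : ℤ) = 2 * (edgeSupport E₂).card - 3)
    (hint : 2 ≤ (edgeSupport E₁ ∩ edgeSupport E₂).card) :
    EdgeIndep (E₁ ∪ E₂) ∧
      ((E₁ ∪ E₂).card : ℤ) = 2 * (edgeSupport (E₁ ∪ E₂)).card - 3 := by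
  have hne₁ : E₁.Nonempty := by
    rcases E₁.eq_empty_or_nonempty with h | h
    · exfalso
      simp [h, edgeSupport] at hcard₁
    · exact h
  have hsubU : E₁ ∪ E₂ ⊆ E := Finset.union_subset hsub₁ hsub₂
  have hneU : (E₁ ∪ E₂).Nonempty := hne₁.mono Finset.subset_union_left
  have hindU : EdgeIndep (E₁ ∪ E₂) := fun E' hE' h' => hE E' (hE'.trans hsubU) h'
  refine ⟨hindU, ?_⟩
  have hupper : ((E₁ ∪ E₂).card : ℤ) ≤ 2 * (edgeSupport (E₁ ∪ E₂)).card - 3 :=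
    hindU _ le_rfl hneU
  -- intersection edge bound
  have hVint : edgeSupport (E₁ ∩ E₂) ⊆ edgeSupport E₁ ∩ edgeSupport E₂ :=
    Finset.subset_inter (edgeSupport_mono Finset.inter_subset_left)
      (edgeSupport_mono Finset.inter_subset_right)
  have hEint : ((E₁ ∩ E₂).card : ℤ) ≤ 2 * ((edgeSupport E₁ ∩ edgeSupport E₂).card : ℤ) - 3 := by
    rcases (E₁ ∩ E₂).eq_empty_or_nonempty with h | h
    · rw [h]
      simp only [Finset.card_empty, Nat.cast_zero]
      have : (2 : ℤ) ≤ ((edgeSupport E₁ ∩ edgeSupport E₂).card : ℤ) := by exact_mod_cast hint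
      linarith
    · have h1 := hind₁ (E₁ ∩ E₂) Finset.inter_subset_left h
      have h2 : (edgeSupport (E₁ ∩ E₂)).card ≤ (edgeSupport E₁ ∩ edgeSupport E₂).card :=
        Finset.card_le_card hVint
      have h2' : ((edgeSupport (E₁ ∩ E₂)).card : ℤ) ≤ ((edgeSupport E₁ ∩ edgeSupport E₂).card : ℤ) := by
        exact_mod_cast h2
      linarith
  have hEcards : ((E₁ ∪ E₂).card : ℤ) + ((E₁ ∩ E₂).card : ℤ) = (E₁.card : ℤ) + (E₂.card : ℤ) := by
    exact_mod_cast congrArg (Nat.cast : ℕ → ℤ) (Finset.card_union_add_card_inter E₁ E₂)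
  have hVcards : ((edgeSupport E₁ ∪ edgeSupport E₂).card : ℤ)
      + ((edgeSupport E₁ ∩ edgeSupport E₂).card : ℤ)
      = ((edgeSupport E₁).card : ℤ) + ((edgeSupport E₂).card : ℤ) := by
    exact_mod_cast congrArg (Nat.cast : ℕ → ℤ)
      (Finset.card_union_add_card_inter (edgeSupport E₁) (edgeSupport E₂))
  rw [edgeSupport_union] at hupper ⊢
  linarith
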